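/- arXiv:2404.16639 — 5 statements merged into one kernel-verified Lean document; each statement's English description precedes it below -/
import Mathlib

section
/- Let n be a positive integer, V a nonzero finite-dimensional ℚ-vector space, and g a ℚ-linear automorphism of V with gⁿ = id_V. Suppose the representation is irreducible, i.e. the only ℚ-subspaces W of V with g(W) ⊆ W are 0 and V. Then there exist a positive divisor r of n, a primitive r-th root of unity ζ_r in the r-th cyclotomic field K_r = ℚ(ζ_r), and a ℚ-linear isomorphism e : V → K_r such that e(g(v)) = ζ_r · e(v) for all v ∈ V. -/
/-!
Letting `X` act as `g` makes `V` a simple `ℚ[X]`-module, hence isomorphic to `ℚ[X] ⧸ I` for a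
maximal ideal `I`, namely the annihilator `ker (aeval g)`. It contains `X ^ n - 1`, the product
of the `Φ_r` with `r ∣ n`, so being prime it contains some `Φ_r`; as `Φ_r` is irreducible over
`ℚ`, `I = (Φ_r)`. Finally `ℚ[X] ⧸ (Φ_r) ≃ ℚ(ζ_r)` by `X ↦ ζ_r`.
-/

open Polynomial

namespace Module.End

variable {R M : Type*} [CommRing R] [AddCommGroup M] [Module R M]

theorem isSimpleModule_aeval' [Nontrivial M] {f : End R M}
    (hf : ∀ W ∈ f.invtSubmodule, W = ⊥ ∨ W = ⊤) :
    IsSimpleModule R[X] (AEval' f) := by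
  have : Nontrivial (AEval' f) := (AEval'.of f).symm.toEquiv.nontrivial
  refine (isSimpleModule_iff _ _).mpr ⟨fun N ↦ ?_⟩
  set W : Submodule R M := (N.restrictScalars R).comap (AEval'.of f).toLinearMap
  have hW : W ∈ f.invtSubmodule := fun v hv ↦ by
    have := N.smul_mem (X : R[X]) (show AEval'.of f v ∈ N from hv)
    rwa [AEval'.X_smul_of] at this
  refine (hf W hW).imp (fun hbot ↦ ?_) (fun htop ↦ ?_)
  · refine (Submodule.eq_bot_iff N).mpr fun x hx ↦ ?_
    have : (AEval'.of f).symm x ∈ W := by simpa [W] using hx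
    simpa [hbot] using this
  · refine Submodule.eq_top_iff'.mpr fun x ↦ ?_
    have : (AEval'.of f).symm x ∈ W := htop ▸ Submodule.mem_top
    simpa [W] using this

theorem exists_linearEquiv_quotient_ker_aeval (f : End R M) [IsSimpleModule R[X] (AEval' f)] :
    ∃ I : Ideal R[X], I.IsMaximal ∧ I = RingHom.ker (aeval f) ∧
      ∃ e : M ≃ₗ[R] R[X] ⧸ I, ∀ v, e (f v) = Ideal.Quotient.mk I X * e v := by
  obtain ⟨I, hI, ⟨e⟩⟩ := isSimpleModule_iff_quot_maximal.mp ‹_›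
  refine ⟨I, hI, ?_, (AEval'.of f).trans (e.restrictScalars R), fun v ↦ ?_⟩
  · rw [← I.annihilator_quotient, ← e.annihilator_eq, AEval.annihilator_eq_ker_aeval]
  · show e (AEval'.of f (f v)) = _
    rw [← AEval'.X_smul_of, map_smul]
    rfl

end Module.End

theorem Ideal.eq_span_cyclotomic_of_X_pow_sub_one_mem {n : ℕ} (hn : 0 < n) {I : Ideal ℚ[X]}
    [hI : I.IsMaximal] (h : X ^ n - 1 ∈ I) :
    ∃ r ∈ n.divisors, I = Ideal.span {cyclotomic r ℚ} := by
  rw [← prod_cyclotomic_eq_X_pow_sub_one hn] at h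
  obtain ⟨r, hr, hrI⟩ := Ideal.IsPrime.prod_mem_iff.mp h
  have := PrincipalIdealRing.isMaximal_of_irreducible
    (cyclotomic.irreducible_rat (Nat.pos_of_mem_divisors hr))
  exact ⟨r, hr, (this.eq_of_le hI.ne_top (Ideal.span_singleton_le_iff_mem _ |>.mpr hrI)).symm⟩

theorem IsCyclotomicExtension.exists_adjoinRoot_cyclotomic_algEquiv (r : ℕ) [NeZero r]
    (L : Type*) [Field L] [Algebra ℚ L] [IsCyclotomicExtension {r} ℚ L] :
    ∃ θ : AdjoinRoot (cyclotomic r ℚ) ≃ₐ[ℚ] L,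
      IsPrimitiveRoot (θ (AdjoinRoot.root _)) r := by
  have hζ := IsCyclotomicExtension.zeta_spec r ℚ L
  have hmin : minpoly ℚ (hζ.powerBasis ℚ).gen = cyclotomic r ℚ :=
    (hζ.minpoly_eq_cyclotomic_of_irreducible (cyclotomic.irreducible_rat (NeZero.pos r))).symm
  refine ⟨AdjoinRoot.equiv' _ (hζ.powerBasis ℚ) ?_ ?_, ?_⟩
  · rw [hmin, AdjoinRoot.aeval_eq, AdjoinRoot.mk_self]
  · rw [← hmin]; exact minpoly.aeval _ _
  · simpa only [AdjoinRoot.equiv'_apply, IsPrimitiveRoot.powerBasis_gen,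
      AdjoinRoot.liftAlgHom_root] using hζ

theorem stmt_3_general (n : ℕ) (hn : 0 < n) (V : Type*) [AddCommGroup V] [Module ℚ V]
    [Nontrivial V]
    (g : V ≃ₗ[ℚ] V) (hg : g ^ n = 1)
    (hirr : ∀ W : Submodule ℚ V, (∀ v ∈ W, g v ∈ W) → W = ⊥ ∨ W = ⊤) :
    ∃ r : ℕ+, (r : ℕ) ∣ n ∧ ∃ ζ : CyclotomicField r ℚ,
      IsPrimitiveRoot ζ (r : ℕ) ∧
      ∃ e : V ≃ₗ[ℚ] CyclotomicField r ℚ, ∀ v, e (g v) = ζ * e v := by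
  have := Module.End.isSimpleModule_aeval' (f := g.toLinearMap) hirr
  obtain ⟨I, hI, hker, e, he⟩ := Module.End.exists_linearEquiv_quotient_ker_aeval g.toLinearMap
  have hmem : X ^ n - 1 ∈ I := by
    rw [hker, RingHom.mem_ker, map_sub, map_pow, aeval_X, map_one, sub_eq_zero,
      ← LinearEquiv.automorphismGroup.toLinearMapMonoidHom_apply, ← map_pow, hg, map_one]
  obtain ⟨r, hr, rfl⟩ := Ideal.eq_span_cyclotomic_of_X_pow_sub_one_mem hn hmem
  lift r to ℕ+ using Nat.pos_of_mem_divisors hr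
  -- stated with the default instances so that instance search can use it below
  have : IsCyclotomicExtension {(r : ℕ)} ℚ (CyclotomicField r ℚ) :=
    CyclotomicField.isCyclotomicExtension r ℚ
  obtain ⟨θ, hθ⟩ :=
    IsCyclotomicExtension.exists_adjoinRoot_cyclotomic_algEquiv r (CyclotomicField r ℚ)
  refine ⟨r, Nat.dvd_of_mem_divisors hr, _, hθ, e.trans θ.toLinearEquiv, fun v ↦ ?_⟩
  exact (congrArg θ (he v)).trans (map_mul θ _ _)

/-- Every irreducible rational representation of a finite cyclic group of
order `n` (given by an automorphism `g` of a nonzero finite-dimensional `ℚ`-vector space `V`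
with `g ^ n = 1` admitting no nontrivial invariant subspace) is isomorphic to some cyclotomic
field `ℚ(ζ_r)` with `r ∣ n`, the generator acting by multiplication by a primitive `r`-th
root of unity `ζ_r`. -/
theorem stmt_3 (n : ℕ) (hn : 0 < n) (V : Type*) [AddCommGroup V] [Module ℚ V]
    [FiniteDimensional ℚ V] [Nontrivial V]
    (g : V ≃ₗ[ℚ] V) (hg : g ^ n = 1)
    (hirr : ∀ W : Submodule ℚ V, (∀ v ∈ W, g v ∈ W) → W = ⊥ ∨ W = ⊤) :
    ∃ r : ℕ+, (r : ℕ) ∣ n ∧ ∃ ζ : CyclotomicField r ℚ,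
      IsPrimitiveRoot ζ (r : ℕ) ∧
      ∃ e : V ≃ₗ[ℚ] CyclotomicField r ℚ, ∀ v, e (g v) = ζ * e v :=
  stmt_3_general n hn V g hg hirr
end

section
/- Let (M, σ_M) and (N, σ_N) be free Γ-modules and B : M × N → ℤ a Γ-equivariant ℤ-bilinear map, i.e. B(σ_M(x), σ_N(y)) = B(x, y). Then the following are equivalent: (1) B is nondegenerate; (2) (M, N, B) is pointwise polarizable, i.e. there exist an integer j ≥ 1 and a ℤ-linear map λ : M → N, injective with finite cokernel, with λ∘σ_M^j = σ_N^j∘λ, B(x, λ(y)) = B(y, λ(x)) for all x, y ∈ M, and B(x, λ(x)) > 0 for all x ≠ 0; (3) (M, N, B) is polarizable, i.e. there exists such a λ with λ∘σ_M = σ_N∘λ. -/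
/-! Averaging a positive definite form over the finite `σM`-orbits gives a `σM`-invariant,
symmetric, positive definite form `Ψ` on `M`. If `B` is nondegenerate, `M` and `N` have the same
rank, so `y ↦ B (·, y)` embeds `N` into `Dual ℤ M` with finite cokernel; hence some multiple
`d • Ψ` factors as `x ↦ B (·, λ x)`, and this `λ` is a polarization, equivariant because `B`
and `Ψ` are. Conversely, if `λ` is a (pointwise) polarization then `B (x, λ x) > 0`, and a `y`
with `B (·, y) = 0` has a nonzero multiple `λ z` with `B (z, λ z) = 0`, so `z = 0` and, `N` being
torsion free, `y = 0`. -/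

section

open Finset

variable {M N P : Type*} [AddCommGroup M] [AddCommGroup N] [AddCommGroup P]

theorem LinearMap.injective_of_exists_apply_ne_zero (B : M →ₗ[ℤ] N →ₗ[ℤ] ℤ)
    (h : ∀ x, x ≠ 0 → ∃ y, B x y ≠ 0) : Function.Injective B := by
  refine (injective_iff_map_eq_zero B).2 fun x hx => ?_
  by_contra hx0
  obtain ⟨y, hy⟩ := h x hx0
  exact hy (by simp [hx])

theorem finrank_le_finrank_of_injective_toDual [Module.Free ℤ N] [Module.Finite ℤ N]
    {B : M →ₗ[ℤ] N →ₗ[ℤ] ℤ} (hB : Function.Injective B) :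
    Module.finrank ℤ M ≤ Module.finrank ℤ N :=
  (LinearMap.finrank_le_finrank_of_injective hB).trans (Module.finrank_linearMap_self ℤ ℤ N).le

theorem finite_quotient_range_of_injective [Module.Free ℤ N] [Module.Finite ℤ N]
    {l : M →ₗ[ℤ] N} (hl : Function.Injective l)
    (hrank : Module.finrank ℤ M = Module.finrank ℤ N) : Finite (N ⧸ LinearMap.range l) :=
  Submodule.finiteQuotientOfFreeOfRankEq _ ((LinearMap.finrank_range_of_inj hl).trans hrank)

theorem exists_comp_eq_nsmul_of_finite_quotient {f : N →ₗ[ℤ] P} (hf : Function.Injective f)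
    [Finite (P ⧸ LinearMap.range f)] (g : M →ₗ[ℤ] P) :
    ∃ d : ℕ, 0 < d ∧ ∃ l : M →ₗ[ℤ] N, f ∘ₗ l = d • g := by
  set d := (LinearMap.range f).toAddSubgroup.index
  have hd : ∀ x, (d • g) x ∈ LinearMap.range f := fun x =>
    (LinearMap.range f).toAddSubgroup.nsmul_index_mem (g x)
  have : Finite (P ⧸ (LinearMap.range f).toAddSubgroup) := ‹Finite (P ⧸ LinearMap.range f)›
  refine ⟨d, Nat.pos_of_ne_zero AddSubgroup.index_ne_zero_of_finite,
    (LinearEquiv.ofInjective f hf).symm ∘ₗ (d • g).codRestrict _ hd, ?_⟩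
  ext x
  simp

theorem exists_symm_posDef_form [Module.Free ℤ M] [Module.Finite ℤ M] :
    ∃ Ψ : M →ₗ[ℤ] M →ₗ[ℤ] ℤ, (∀ x y, Ψ x y = Ψ y x) ∧ ∀ x, x ≠ 0 → 0 < Ψ x x := by
  set b := Module.Free.chooseBasis ℤ M
  set Ψ := ∑ i, (b.coord i).smulRight (b.coord i)
  have hΨ : ∀ x y, Ψ x y = ∑ i, b.repr x i * b.repr y i := by
    simp [Ψ, LinearMap.sum_apply]
  refine ⟨Ψ, fun x y => by simp only [hΨ, mul_comm], fun x hx => ?_⟩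
  obtain ⟨i, hi⟩ : ∃ i, b.repr x i ≠ 0 := by
    by_contra! h
    exact hx (b.repr.map_eq_zero_iff.mp (Finsupp.ext h))
  rw [hΨ]
  exact sum_pos' (fun j _ => mul_self_nonneg _) ⟨i, mem_univ i, mul_self_pos.mpr hi⟩

theorem sum_range_succ_eq_sum_range_of_eq {β : Type*} [AddCommMonoid β] [IsRightCancelAdd β]
    {F : ℕ → β} {n : ℕ} (h : F n = F 0) :
    ∑ k ∈ range n, F (k + 1) = ∑ k ∈ range n, F k :=
  add_right_cancel (b := F 0) (by rw [← sum_range_succ', sum_range_succ, h])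

theorem exists_invariant_symm_posDef_form (σ : M ≃ₗ[ℤ] M) (hσ : ∃ n : ℕ, 0 < n ∧ σ ^ n = 1)
    {Ψ₀ : M →ₗ[ℤ] M →ₗ[ℤ] ℤ} (hsymm : ∀ x y, Ψ₀ x y = Ψ₀ y x)
    (hpos : ∀ x, x ≠ 0 → 0 < Ψ₀ x x) :
    ∃ Ψ : M →ₗ[ℤ] M →ₗ[ℤ] ℤ, (∀ x y, Ψ x y = Ψ y x) ∧ (∀ x y, Ψ (σ x) (σ y) = Ψ x y) ∧
      ∀ x, x ≠ 0 → 0 < Ψ x x := by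
  obtain ⟨n, hn, hσn⟩ := hσ
  set Ψ := ∑ k ∈ range n, Ψ₀.compl₁₂ (σ ^ k).toLinearMap (σ ^ k).toLinearMap
  have hΨ : ∀ x y, Ψ x y = ∑ k ∈ range n, Ψ₀ ((σ ^ k) x) ((σ ^ k) y) := by
    simp [Ψ, LinearMap.sum_apply]
  refine ⟨Ψ, fun x y => ?_, fun x y => ?_, fun x hx => ?_⟩
  · simp only [hΨ, hsymm ((σ ^ _) x)]
  · have hpow : ∀ (k : ℕ) (x : M), (σ ^ k) (σ x) = (σ ^ (k + 1)) x := fun k x => by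
      rw [pow_succ]; rfl
    simp only [hΨ, hpow]
    exact sum_range_succ_eq_sum_range_of_eq (F := fun k => Ψ₀ ((σ ^ k) x) ((σ ^ k) y))
      (by simp [hσn])
  · rw [hΨ]
    refine sum_pos' (fun k _ => ?_) ⟨0, mem_range.mpr hn, by simpa using hpos x hx⟩
    by_cases h : (σ ^ k) x = 0
    · simp [h]
    · exact (hpos _ h).le

theorem exists_polarization_of_nondegenerate [Module.Free ℤ M] [Module.Finite ℤ M]
    [Module.Free ℤ N] [Module.Finite ℤ N] (σM : M ≃ₗ[ℤ] M) (σN : N ≃ₗ[ℤ] N)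
    (hσM : ∃ n : ℕ, 0 < n ∧ σM ^ n = 1) (B : M →ₗ[ℤ] N →ₗ[ℤ] ℤ)
    (hBeq : ∀ x y, B (σM x) (σN y) = B x y)
    (hleft : ∀ x : M, x ≠ 0 → ∃ y, B x y ≠ 0) (hright : ∀ y : N, y ≠ 0 → ∃ x, B x y ≠ 0) :
    ∃ l : M →ₗ[ℤ] N,
      Function.Injective l ∧ Finite (N ⧸ LinearMap.range l) ∧
      (∀ x, l (σM x) = σN (l x)) ∧
      (∀ x y, B x (l y) = B y (l x)) ∧
      (∀ x, x ≠ 0 → 0 < B x (l x)) := by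
  obtain ⟨Ψ₀, hsymm₀, hpos₀⟩ := exists_symm_posDef_form (M := M)
  obtain ⟨Ψ, hsymm, hinv, hpos⟩ := exists_invariant_symm_posDef_form σM hσM hsymm₀ hpos₀
  have hB := B.injective_of_exists_apply_ne_zero hleft
  have hBflip := B.flip.injective_of_exists_apply_ne_zero (by simpa using hright)
  have hrank : Module.finrank ℤ M = Module.finrank ℤ N :=
    (finrank_le_finrank_of_injective_toDual hB).antisymm
      (finrank_le_finrank_of_injective_toDual hBflip)
  have := finite_quotient_range_of_injective hBflip
    (hrank.symm.trans (Module.finrank_linearMap_self ℤ ℤ M).symm)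
  obtain ⟨d, hd, l, hl⟩ := exists_comp_eq_nsmul_of_finite_quotient hBflip Ψ
  have hBl : ∀ x y, B x (l y) = d * Ψ y x := fun x y => by
    simpa using LinearMap.congr_fun (LinearMap.congr_fun hl y) x
  have hlpos : ∀ x, x ≠ 0 → 0 < B x (l x) := fun x hx => by
    rw [hBl]; exact mul_pos (by exact_mod_cast hd) (hpos x hx)
  have hlinj : Function.Injective l := (injective_iff_map_eq_zero l).2 fun x hx => by
    by_contra hx0
    simpa [hx] using hlpos x hx0
  refine ⟨l, hlinj, finite_quotient_range_of_injective hlinj hrank, fun y => ?_,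
    fun x y => by rw [hBl, hBl, hsymm], hlpos⟩
  -- paired with `σM x`, both sides give `d * Ψ y x` by invariance of `Ψ` and of `B`
  refine hBflip (LinearMap.ext fun x => ?_)
  obtain ⟨x, rfl⟩ := σM.surjective x
  simp only [LinearMap.flip_apply, hBeq, hBl, hinv]

theorem nondegenerate_of_finite_quotient_range [Module.IsTorsionFree ℤ N]
    {B : M →ₗ[ℤ] N →ₗ[ℤ] ℤ} {l : M →ₗ[ℤ] N} [Finite (N ⧸ LinearMap.range l)]
    (hpos : ∀ x, x ≠ 0 → 0 < B x (l x)) :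
    (∀ x : M, x ≠ 0 → ∃ y, B x y ≠ 0) ∧ (∀ y : N, y ≠ 0 → ∃ x, B x y ≠ 0) := by
  refine ⟨fun x hx => ⟨l x, (hpos x hx).ne'⟩, fun y hy => ?_⟩
  by_contra! hB
  set k := (LinearMap.range l).toAddSubgroup.index
  obtain ⟨z, hz⟩ : k • y ∈ LinearMap.range l :=
    (LinearMap.range l).toAddSubgroup.nsmul_index_mem y
  have hz0 : z = 0 := by
    by_contra hz0
    simpa [hz, hB] using hpos z hz0
  have : Finite (N ⧸ (LinearMap.range l).toAddSubgroup) := ‹Finite (N ⧸ LinearMap.range l)›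
  have hk : (k : ℤ) ≠ 0 := by exact_mod_cast AddSubgroup.index_ne_zero_of_finite
  have hky : (k : ℤ) • y = 0 := by rw [natCast_zsmul, ← hz, hz0, map_zero]
  exact hy ((smul_eq_zero.mp hky).resolve_left hk)

end

theorem stmt_6_general {M N : Type*}
    [AddCommGroup M] [Module ℤ M] [Module.Free ℤ M] [Module.Finite ℤ M]
    [AddCommGroup N] [Module ℤ N] [Module.Free ℤ N] [Module.Finite ℤ N]
    (σM : M ≃ₗ[ℤ] M) (σN : N ≃ₗ[ℤ] N)
    (hσM : ∃ n : ℕ, 0 < n ∧ σM ^ n = 1)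
    (B : M →ₗ[ℤ] N →ₗ[ℤ] ℤ)
    (hBeq : ∀ x y, B (σM x) (σN y) = B x y) :
    (((∀ x : M, x ≠ 0 → ∃ y, B x y ≠ 0) ∧ (∀ y : N, y ≠ 0 → ∃ x, B x y ≠ 0)) ↔
      (∃ j : ℕ, 1 ≤ j ∧ ∃ l : M →ₗ[ℤ] N,
        Function.Injective l ∧ Finite (N ⧸ LinearMap.range l) ∧
        (∀ x, l ((σM ^ j) x) = (σN ^ j) (l x)) ∧
        (∀ x y, B x (l y) = B y (l x)) ∧
        (∀ x, x ≠ 0 → 0 < B x (l x)))) ∧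
    ((∃ j : ℕ, 1 ≤ j ∧ ∃ l : M →ₗ[ℤ] N,
        Function.Injective l ∧ Finite (N ⧸ LinearMap.range l) ∧
        (∀ x, l ((σM ^ j) x) = (σN ^ j) (l x)) ∧
        (∀ x y, B x (l y) = B y (l x)) ∧
        (∀ x, x ≠ 0 → 0 < B x (l x))) ↔
      (∃ l : M →ₗ[ℤ] N,
        Function.Injective l ∧ Finite (N ⧸ LinearMap.range l) ∧
        (∀ x, l (σM x) = σN (l x)) ∧
        (∀ x y, B x (l y) = B y (l x)) ∧
        (∀ x, x ≠ 0 → 0 < B x (l x)))) := by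
  -- `ℤ`-module structures are unique, so we may use the canonical ones
  obtain rfl := Subsingleton.elim ‹Module ℤ M› (AddCommGroup.toIntModule M)
  obtain rfl := Subsingleton.elim ‹Module ℤ N› (AddCommGroup.toIntModule N)
  refine (fun {P₁ P₂ P₃ : Prop} (h13 : P₁ → P₃) (h32 : P₃ → P₂) (h21 : P₂ → P₁) =>
      (⟨⟨h32 ∘ h13, h21⟩, h13 ∘ h21, h32⟩ : (P₁ ↔ P₂) ∧ (P₂ ↔ P₃))) ?_ ?_ ?_
  · exact fun ⟨hleft, hright⟩ =>
      exists_polarization_of_nondegenerate σM σN hσM B hBeq hleft hright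
  · exact fun ⟨l, hinj, hfin, hequiv, hsymm, hpos⟩ =>
      ⟨1, le_rfl, l, hinj, hfin, by simpa using hequiv, hsymm, hpos⟩
  · exact fun ⟨_, _, _, _, _, _, _, hpos⟩ => nondegenerate_of_finite_quotient_range hpos

/-- For a `Γ`-equivariant `ℤ`-bilinear pairing `B : M × N → ℤ` between free
`Γ`-modules, the following are equivalent: (1) `B` is nondegenerate; (2) `(M, N, B)` is
pointwise polarizable (there are `j ≥ 1` and `λ : M → N` injective with finite cokernel,
equivariant for the `j`-th powers of the automorphisms, symmetric and positive definite with
respect to `B`); (3) `(M, N, B)` is polarizable (such a `λ` exists with `j = 1`). -/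
theorem stmt_6 {M N : Type*}
    [AddCommGroup M] [Module ℤ M] [Module.Free ℤ M] [Module.Finite ℤ M]
    [AddCommGroup N] [Module ℤ N] [Module.Free ℤ N] [Module.Finite ℤ N]
    (σM : M ≃ₗ[ℤ] M) (σN : N ≃ₗ[ℤ] N)
    (hσM : ∃ n : ℕ, 0 < n ∧ σM ^ n = 1) (hσN : ∃ n : ℕ, 0 < n ∧ σN ^ n = 1)
    (B : M →ₗ[ℤ] N →ₗ[ℤ] ℤ)
    (hBeq : ∀ x y, B (σM x) (σN y) = B x y) :
    (((∀ x : M, x ≠ 0 → ∃ y, B x y ≠ 0) ∧ (∀ y : N, y ≠ 0 → ∃ x, B x y ≠ 0)) ↔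
      (∃ j : ℕ, 1 ≤ j ∧ ∃ l : M →ₗ[ℤ] N,
        Function.Injective l ∧ Finite (N ⧸ LinearMap.range l) ∧
        (∀ x, l ((σM ^ j) x) = (σN ^ j) (l x)) ∧
        (∀ x y, B x (l y) = B y (l x)) ∧
        (∀ x, x ≠ 0 → 0 < B x (l x)))) ∧
    ((∃ j : ℕ, 1 ≤ j ∧ ∃ l : M →ₗ[ℤ] N,
        Function.Injective l ∧ Finite (N ⧸ LinearMap.range l) ∧
        (∀ x, l ((σM ^ j) x) = (σN ^ j) (l x)) ∧
        (∀ x y, B x (l y) = B y (l x)) ∧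
        (∀ x, x ≠ 0 → 0 < B x (l x))) ↔
      (∃ l : M →ₗ[ℤ] N,
        Function.Injective l ∧ Finite (N ⧸ LinearMap.range l) ∧
        (∀ x, l (σM x) = σN (l x)) ∧
        (∀ x y, B x (l y) = B y (l x)) ∧
        (∀ x, x ≠ 0 → 0 < B x (l x)))) :=
  stmt_6_general σM σN hσM B hBeq
end

section
/- Let k ≥ 1, let (M, σ_M) and (N, σ_N) be free Γ-modules, and let B = (B_1, …, B_k) : M × N → ℤ^k be a Γ-equivariant ℤ-bilinear map (B(σ_M(x), σ_N(y)) = B(x, y)). Assume (M, N, B) is pointwise polarizable: there exist an integer j ≥ 1 and a ℤ-linear map λ : M → N, injective with finite cokernel, with λ∘σ_M^j = σ_N^j∘λ, B(x, λ(y)) = B(y, λ(x)) in ℤ^k for all x, y ∈ M, and for every x ≠ 0 the vector B(x, λ(x)) has all coordinates ≥ 0 and is not the zero vector. Then (M, σ_M) is a simple free Γ-module if and only if (N, σ_N) is a simple free Γ-module. -/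
/-!
Pointwise polarizability makes `B` nondegenerate on both sides, and since `λ` has finite
cokernel, `rank M = rank N`. Let `W ⊆ N` be a nonzero `σ_N`-stable sublattice and pick
`y₀ ∈ W`, `x₀ ∈ M` and a coordinate `i` with `B_i(x₀, y₀) ≠ 0`. The left annihilator of `W`
under `B_i` is `σ_M`-stable (this uses that `W` is also `σ_N⁻¹`-stable, as `σ_N` has finite
order) and contains no nonzero multiple of `x₀`, so it has infinite index; if `M` is simple it
is therefore `0`, and `M` embeds into `Hom(W, ℤ)`. Hence `rank W = rank N` and `W` has finite
index. The converse is the same argument applied to the transposed pairing.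
-/

open Module

lemma LinearEquiv.symm_apply_mem_of_isOfFinOrder {R N : Type*} [Semiring R] [AddCommMonoid N]
    [Module R N] {σ : N ≃ₗ[R] N} (hσ : IsOfFinOrder σ) {W : Submodule R N}
    (hW : ∀ y ∈ W, σ y ∈ W) {y : N} (hy : y ∈ W) : σ.symm y ∈ W := by
  obtain ⟨m, hm⟩ : σ⁻¹ ∈ Submonoid.powers σ :=
    hσ.mem_powers_iff_mem_zpowers.mpr (inv_mem (Subgroup.mem_zpowers σ))
  have hpow : ∀ n : ℕ, ∀ y ∈ W, (σ ^ n) y ∈ W := by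
    intro n
    induction n with
    | zero => exact fun y hy => hy
    | succ n ih => exact fun y hy => by rw [pow_succ]; exact ih _ (hW y hy)
  rw [← LinearEquiv.coe_inv, ← hm]
  exact hpow m y hy

lemma Submodule.exists_nsmul_mem_of_finite_quotient {N : Type*} [AddCommGroup N]
    (W : Submodule ℤ N) [Finite (N ⧸ W)] (y : N) : ∃ m : ℕ, m ≠ 0 ∧ m • y ∈ W :=
  ⟨W.toAddSubgroup.index, AddSubgroup.index_ne_zero_of_finite (hH := ‹Finite (N ⧸ W)›),
    W.toAddSubgroup.nsmul_index_mem y⟩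

lemma LinearMap.exists_apply_ne_zero_of_finite_quotient_range {M N P : Type*} [AddCommGroup M]
    [AddCommGroup N] [AddCommGroup P] [IsTorsionFree ℤ N] [IsTorsionFree ℤ P]
    (B : M →ₗ[ℤ] N →ₗ[ℤ] P) (l : M →ₗ[ℤ] N) [Finite (N ⧸ range l)]
    (hl : ∀ x ≠ 0, B x (l x) ≠ 0) {y : N} (hy : y ≠ 0) : ∃ x, B x y ≠ 0 := by
  obtain ⟨m, hm, z, hz⟩ := (range l).exists_nsmul_mem_of_finite_quotient y
  have hz0 : z ≠ 0 := by
    rintro rfl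
    rw [map_zero, ← natCast_zsmul] at hz
    exact smul_ne_zero (Int.natCast_ne_zero.mpr hm) hy hz.symm
  refine ⟨z, fun h => hl z hz0 ?_⟩
  rw [hz, map_nsmul, h, smul_zero]

/-- `(N, σ)` is a simple free `Γ`-module; the finite order of `σ` is not part of this predicate. -/
def IsSimpleLattice {N : Type*} [AddCommGroup N] (σ : N ≃ₗ[ℤ] N) : Prop :=
  Nontrivial N ∧ ∀ W : Submodule ℤ N, (∀ y ∈ W, σ y ∈ W) → W = ⊥ ∨ Finite (N ⧸ W)

theorem IsSimpleLattice.of_pairing {M N ι : Type*}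
    [AddCommGroup M] [Module.Free ℤ M] [Module.Finite ℤ M]
    [AddCommGroup N] [Module.Free ℤ N] [Module.Finite ℤ N]
    {σM : M ≃ₗ[ℤ] M} {σN : N ≃ₗ[ℤ] N} (hσN : IsOfFinOrder σN)
    {B : M →ₗ[ℤ] N →ₗ[ℤ] (ι → ℤ)} (hB : ∀ x y, B (σM x) (σN y) = B x y)
    (hB_right : ∀ y ≠ 0, ∃ x, B x y ≠ 0) (hrank : finrank ℤ M = finrank ℤ N)
    (hM : IsSimpleLattice σM) : IsSimpleLattice σN := by
  refine ⟨finrank_pos_iff.mp (hrank ▸ finrank_pos_iff.mpr hM.1), fun W hW => ?_⟩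
  refine or_iff_not_imp_left.mpr fun hW0 => ?_
  obtain ⟨y₀, hy₀W, hy₀⟩ := W.ne_bot_iff.mp hW0
  obtain ⟨x₀, hx₀⟩ := hB_right y₀ hy₀
  obtain ⟨i, hi⟩ := Function.ne_iff.mp hx₀
  set g : M →ₗ[ℤ] W →ₗ[ℤ] ℤ := (B.compr₂ (LinearMap.proj i)).compl₂ W.subtype
  have hg_inv : ∀ x ∈ LinearMap.ker g, σM x ∈ LinearMap.ker g := by
    intro x hx
    ext ⟨y, hy⟩
    have := LinearMap.congr_fun hx ⟨σN.symm y, σN.symm_apply_mem_of_isOfFinOrder hσN hW hy⟩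
    simpa [g, ← hB x] using this
  have hg_ker : LinearMap.ker g = ⊥ := by
    refine (hM.2 _ hg_inv).resolve_right fun hfin => hi ?_
    obtain ⟨m, hm, hmem⟩ := (LinearMap.ker g).exists_nsmul_mem_of_finite_quotient x₀
    have := LinearMap.congr_fun hmem ⟨y₀, hy₀W⟩
    simpa [g, hm] using this
  have hrank_W : finrank ℤ M ≤ finrank ℤ W :=
    (LinearMap.finrank_le_finrank_of_injective (LinearMap.ker_eq_bot.mp hg_ker)).trans_eq
      (finrank_linearMap_self ℤ ℤ W)
  rw [Submodule.finiteQuotient_iff]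
  exact W.finrank_le.antisymm (hrank ▸ hrank_W)

theorem stmt_14_general {M N : Type*}
    [AddCommGroup M] [Module ℤ M] [Module.Free ℤ M] [Module.Finite ℤ M]
    [AddCommGroup N] [Module ℤ N] [Module.Free ℤ N] [Module.Finite ℤ N]
    (k : ℕ)
    (σM : M ≃ₗ[ℤ] M) (σN : N ≃ₗ[ℤ] N)
    (hσM : ∃ n : ℕ, 0 < n ∧ σM ^ n = 1) (hσN : ∃ n : ℕ, 0 < n ∧ σN ^ n = 1)
    (B : M →ₗ[ℤ] N →ₗ[ℤ] (Fin k → ℤ))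
    (hBeq : ∀ x y, B (σM x) (σN y) = B x y)
    (hpp : ∃ j : ℕ, 1 ≤ j ∧ ∃ l : M →ₗ[ℤ] N,
      Function.Injective l ∧ Finite (N ⧸ LinearMap.range l) ∧
      (∀ x, l ((σM ^ j) x) = (σN ^ j) (l x)) ∧
      (∀ x y, B x (l y) = B y (l x)) ∧
      (∀ x : M, x ≠ 0 → (∀ i, 0 ≤ B x (l x) i) ∧ B x (l x) ≠ 0)) :
    ((Nontrivial M ∧
        ∀ W : Submodule ℤ M, (∀ x ∈ W, σM x ∈ W) → W = ⊥ ∨ Finite (M ⧸ W)) ↔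
      (Nontrivial N ∧
        ∀ W : Submodule ℤ N, (∀ x ∈ W, σN x ∈ W) → W = ⊥ ∨ Finite (N ⧸ W))) := by
  obtain rfl : ‹Module ℤ M› = AddCommGroup.toIntModule M := Subsingleton.elim _ _
  obtain rfl : ‹Module ℤ N› = AddCommGroup.toIntModule N := Subsingleton.elim _ _
  obtain ⟨-, -, l, hl_inj, hl_coker, -, -, hl_pos⟩ := hpp
  have hrank : finrank ℤ M = finrank ℤ N :=
    (LinearEquiv.ofInjective l hl_inj).finrank_eq.trans
      ((Submodule.finiteQuotient_iff _).mp hl_coker)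
  have hB_left : ∀ x ≠ 0, ∃ y, B x y ≠ 0 := fun x hx => ⟨l x, (hl_pos x hx).2⟩
  have hB_right : ∀ y ≠ 0, ∃ x, B x y ≠ 0 := fun y hy =>
    B.exists_apply_ne_zero_of_finite_quotient_range l (fun x hx => (hl_pos x hx).2) hy
  exact ⟨IsSimpleLattice.of_pairing (isOfFinOrder_iff_pow_eq_one.mpr hσN) hBeq hB_right hrank,
    IsSimpleLattice.of_pairing (B := B.flip) (isOfFinOrder_iff_pow_eq_one.mpr hσM)
      (fun y x => hBeq x y) hB_left hrank.symm⟩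

/-- Let `B : M × N → ℤ^k` be a `Γ`-equivariant bilinear pairing between
free `Γ`-modules which is pointwise polarizable (there is `j ≥ 1` and `λ : M → N` injective
with finite cokernel, equivariant for the `j`-th powers, symmetric with respect to `B`, and
`B(x, λ x)` is a nonzero vector with nonnegative coordinates for every `x ≠ 0`).  Then
`(M, σ_M)` is a simple free `Γ`-module if and only if `(N, σ_N)` is. -/
theorem stmt_14 {M N : Type*}
    [AddCommGroup M] [Module ℤ M] [Module.Free ℤ M] [Module.Finite ℤ M]
    [AddCommGroup N] [Module ℤ N] [Module.Free ℤ N] [Module.Finite ℤ N]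
    (k : ℕ) (hk : 1 ≤ k)
    (σM : M ≃ₗ[ℤ] M) (σN : N ≃ₗ[ℤ] N)
    (hσM : ∃ n : ℕ, 0 < n ∧ σM ^ n = 1) (hσN : ∃ n : ℕ, 0 < n ∧ σN ^ n = 1)
    (B : M →ₗ[ℤ] N →ₗ[ℤ] (Fin k → ℤ))
    (hBeq : ∀ x y, B (σM x) (σN y) = B x y)
    (hpp : ∃ j : ℕ, 1 ≤ j ∧ ∃ l : M →ₗ[ℤ] N,
      Function.Injective l ∧ Finite (N ⧸ LinearMap.range l) ∧
      (∀ x, l ((σM ^ j) x) = (σN ^ j) (l x)) ∧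
      (∀ x y, B x (l y) = B y (l x)) ∧
      (∀ x : M, x ≠ 0 → (∀ i, 0 ≤ B x (l x) i) ∧ B x (l x) ≠ 0)) :
    ((Nontrivial M ∧
        ∀ W : Submodule ℤ M, (∀ x ∈ W, σM x ∈ W) → W = ⊥ ∨ Finite (M ⧸ W)) ↔
      (Nontrivial N ∧
        ∀ W : Submodule ℤ N, (∀ x ∈ W, σN x ∈ W) → W = ⊥ ∨ Finite (N ⧸ W))) :=
  stmt_14_general k σM σN hσM hσN B hBeq hpp
end

section
/- Let k and r be positive integers, K_r = ℚ(ζ_r) with ring of integers 𝓞_r = ℤ[ζ_r], ζ_r a primitive r-th root of unity, and c a ℚ-algebra automorphism of K_r with c(ζ_r) = ζ_r^{-1}. Let t_1, …, t_k ∈ 𝓞_r and let t ∈ K_r be nonzero with Tr(x · t · c(y)) ∈ ℤ for all x, y ∈ 𝓞_r. For each i define B_i(x, y) = Tr(x · t_i · c(t) · c(y)) for x, y ∈ 𝓞_r. Then the following are equivalent: (a) for each i, B_i(x, y) = B_i(y, x) for all x, y and B_i(x, x) ≥ 0 for all x, and moreover Σ_{i=1}^k B_i(x, x) > 0 for all x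 ≠ 0; (b) for each i, the element t_i · c(t) is either zero or totally positive, and Σ_{i=1}^k t_i · c(t) is totally positive. -/
/-!
Write `s = t_i · c(t)`, so that `B_i(x, y) = Tr(x s c(y))`. Every embedding `σ : K → ℂ` turns `c`
into complex conjugation, hence `Tr(x s c(x)) = Σ_σ Re σ(s) · |σ(x)|²`. Since `ℤ[ζ]` spans `K`
over `ℚ`, symmetry of the form on `ℤ[ζ]` forces `c(s) = s` by nondegeneracy of the trace, so
every `σ(s)` is real, and (b) ⇒ (a) is read off the formula. For (a) ⇒ (b), nonnegativity of
`Σ_σ Re σ(s) · |p(σ ζ)|²` for rational polynomials `p` extends by density to real ones, and a real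
polynomial vanishing at every `σ ζ` with `Re σ(s) ≠ Re σ₀(s)` isolates the sign of `Re σ₀(s)`.
-/

open Complex ComplexConjugate Polynomial Finset

namespace CyclotomicTraceForm

theorem nonneg_of_continuous_of_forall_ratCast {ι : Type*} {f : (ι → ℝ) → ℝ} (hf : Continuous f)
    (h : ∀ q : ι → ℚ, 0 ≤ f fun i => (q i : ℝ)) (a : ι → ℝ) : 0 ≤ f a :=
  (DenseRange.piMap fun _ => Rat.denseRange_cast).induction_on a
    (isClosed_le continuous_const hf) h

theorem exists_aeval_eq_zero_and_ne_zero_of_notMem (Z : Finset ℂ) {w : ℂ} (hw : w ∉ Z)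
    (hw' : conj w ∉ Z) : ∃ p : ℝ[X], (∀ z ∈ Z, aeval z p = 0) ∧ aeval w p ≠ 0 := by
  have hquad : ∀ z w : ℂ,
      aeval w (X ^ 2 - C (2 * z.re) * X + C (normSq z)) = (w - z) * (w - conj z) := by
    intro z w
    have h1 := add_conj z
    have h2 := mul_conj z
    simp only [map_add, map_sub, map_mul, map_pow, aeval_X, aeval_C, Complex.coe_algebraMap]
    push_cast at h1 ⊢
    linear_combination w * h1 - h2
  refine ⟨∏ z ∈ Z, (X ^ 2 - C (2 * z.re) * X + C (normSq z)), fun z hz => ?_, ?_⟩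
  · rw [map_prod]
    exact prod_eq_zero hz (by rw [hquad, sub_self, zero_mul])
  · rw [map_prod, prod_ne_zero_iff]
    intro z hz
    rw [hquad]
    refine mul_ne_zero (sub_ne_zero.mpr fun h => hw (h ▸ hz)) (sub_ne_zero.mpr fun h => hw' ?_)
    rwa [h, conj_conj]

variable {K : Type*} [Field K] [Algebra ℚ K] {c : K ≃ₐ[ℚ] K}

def IsComplexConj (c : K ≃ₐ[ℚ] K) : Prop :=
  ∀ (σ : K →ₐ[ℚ] ℂ) (x : K), σ (c x) = conj (σ x)

def IsTotallyPositive (s : K) : Prop := ∀ σ : K →+* ℂ, ∃ a : ℝ, 0 < a ∧ σ s = a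

theorem IsTotallyPositive.re_pos {s : K} (h : IsTotallyPositive s) (σ : K →ₐ[ℚ] ℂ) :
    0 < (σ s).re := by
  obtain ⟨a, ha, he⟩ := h σ
  rwa [show σ s = a from he, ofReal_re]

theorem isComplexConj_of_adjoin_eq_top {ζ : K} (htop : Algebra.adjoin ℚ {ζ} = ⊤) {r : ℕ}
    (hr : r ≠ 0) (hζ : ζ ^ r = 1) (hc : c ζ = ζ⁻¹) (σ : K →ₐ[ℚ] ℂ) (x : K) :
    σ (c x) = conj (σ x) := by
  have hnorm : ‖σ ζ‖ = 1 := norm_eq_one_of_pow_eq_one (by rw [← map_pow, hζ, map_one]) hr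
  have hinv : conj (σ ζ) = (σ ζ)⁻¹ := by
    rw [inv_def, normSq_eq_norm_sq, hnorm]
    simp
  have hcomp : σ.comp c.toAlgHom = (conjAe.toAlgHom.restrictScalars ℚ).comp σ :=
    AlgHom.ext_of_adjoin_eq_top htop (by simp [Set.EqOn, hc, hinv, conjAe])
  exact DFunLike.congr_fun hcomp x

theorem exists_nat_mul_mem_adjoin_int {ζ : K} (htop : Algebra.adjoin ℚ {ζ} = ⊤) (x : K) :
    ∃ d : ℕ, 0 < d ∧ (d : K) * x ∈ Algebra.adjoin ℤ {ζ} := by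
  have hx : x ∈ Algebra.adjoin ℚ {ζ} := htop ▸ Algebra.mem_top
  induction hx using Algebra.adjoin_induction with
  | mem y hy =>
    rw [Set.mem_singleton_iff.mp hy]
    exact ⟨1, one_pos, by simp [Algebra.self_mem_adjoin_singleton]⟩
  | algebraMap q =>
    refine ⟨q.den, q.den_pos, ?_⟩
    have hq : (q.den : K) * algebraMap ℚ K q = (q.num : K) := by
      rw [← map_natCast (algebraMap ℚ K), ← map_mul, mul_comm, Rat.mul_den_eq_num, map_intCast]
    rw [hq]
    exact intCast_mem _ _
  | add y z _ _ hy hz =>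
    obtain ⟨d, hd, hdy⟩ := hy
    obtain ⟨e, he, hez⟩ := hz
    refine ⟨d * e, Nat.mul_pos hd he, ?_⟩
    have hsum : ((d * e : ℕ) : K) * (y + z) = e * (d * y) + d * (e * z) := by push_cast; ring
    rw [hsum]
    exact add_mem (mul_mem (natCast_mem _ _) hdy) (mul_mem (natCast_mem _ _) hez)
  | mul y z _ _ hy hz =>
    obtain ⟨d, hd, hdy⟩ := hy
    obtain ⟨e, he, hez⟩ := hz
    refine ⟨d * e, Nat.mul_pos hd he, ?_⟩
    have hprod : ((d * e : ℕ) : K) * (y * z) = (d * y) * (e * z) := by push_cast; ring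
    rw [hprod]
    exact mul_mem hdy hez

theorem IsComplexConj.ofReal_re_apply (hconj : IsComplexConj c) {s : K}
    (hs : c s = s) (σ : K →ₐ[ℚ] ℂ) : ((σ s).re : ℂ) = σ s :=
  conj_eq_iff_re.mp (by rw [← hconj, hs])

theorem trace_mul_mul_nonneg_of_forall_mem {A : Subalgebra ℤ K}
    (hA : ∀ x : K, ∃ d : ℕ, 0 < d ∧ (d : K) * x ∈ A) {s : K}
    (hs : ∀ x : A, 0 ≤ Algebra.trace ℚ K ((x : K) * s * c (x : K))) (x : K) :
    0 ≤ Algebra.trace ℚ K (x * s * c x) := by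
  obtain ⟨d, hd, hdx⟩ := hA x
  have hscale : (d * x) * s * c (d * x) = ((d : ℚ) * d) • (x * s * c x) := by
    rw [map_mul, map_natCast, Algebra.smul_def]
    push_cast
    ring
  have h := hs ⟨_, hdx⟩
  simp only [hscale, map_smul, smul_eq_mul] at h
  exact nonneg_of_mul_nonneg_right h (by positivity)

theorem IsComplexConj.isTotallyPositive (hconj : IsComplexConj c) {s : K}
    (hs : c s = s) (hre : ∀ σ : K →ₐ[ℚ] ℂ, 0 ≤ (σ s).re) (hs0 : s ≠ 0) :
    IsTotallyPositive s := by
  intro σ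
  have hσ := hconj.ofReal_re_apply hs σ.toRatAlgHom
  refine ⟨(σ s).re, (hre σ.toRatAlgHom).lt_of_ne fun h => hs0 ?_, hσ.symm⟩
  rw [← map_eq_zero_iff σ σ.injective, ← RingHom.toRatAlgHom_apply, ← hσ, ← h, ofReal_zero]

variable [FiniteDimensional ℚ K]

theorem IsComplexConj.apply_apply (hconj : IsComplexConj c) (x : K) : c (c x) = x := by
  obtain ⟨σ⟩ : Nonempty (K →ₐ[ℚ] ℂ) := ⟨IsAlgClosed.lift⟩
  refine σ.injective ?_
  change σ _ = σ _
  rw [hconj, hconj, conj_conj]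

theorem IsComplexConj.apply_eq_of_forall_eq_ofReal (hconj : IsComplexConj c) {s : K}
    (h : ∀ σ : K →ₐ[ℚ] ℂ, ∃ a : ℝ, σ s = a) : c s = s := by
  obtain ⟨σ⟩ : Nonempty (K →ₐ[ℚ] ℂ) := ⟨IsAlgClosed.lift⟩
  obtain ⟨a, ha⟩ := h σ
  refine σ.injective ?_
  change σ _ = σ _
  rw [hconj, ha, conj_ofReal]

theorem IsComplexConj.trace_mul_mul_comm (hconj : IsComplexConj c) {s : K}
    (hs : c s = s) (x y : K) :
    Algebra.trace ℚ K (x * s * c y) = Algebra.trace ℚ K (y * s * c x) := by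
  have hc : c (y * s * c x) = x * s * c y := by
    rw [map_mul, map_mul, hs, hconj.apply_apply]
    ring
  rw [← hc, Algebra.trace_eq_of_algEquiv]

theorem IsComplexConj.ratCast_trace_mul_mul (hconj : IsComplexConj c) (s x : K) :
    ((Algebra.trace ℚ K (x * s * c x) : ℚ) : ℝ) =
      ∑ σ : K →ₐ[ℚ] ℂ, (σ s).re * normSq (σ x) := by
  have hsum : ((Algebra.trace ℚ K (x * s * c x) : ℚ) : ℂ) =
      ∑ σ : K →ₐ[ℚ] ℂ, σ s * (normSq (σ x) : ℂ) := by
    rw [← eq_ratCast (algebraMap ℚ ℂ), trace_eq_sum_embeddings (E := ℂ)]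
    refine sum_congr rfl fun σ _ => ?_
    rw [map_mul, map_mul, hconj σ x, mul_comm (σ x) (σ s), mul_assoc, mul_conj]
  simpa using congrArg re hsum

theorem IsComplexConj.trace_mul_mul_nonneg (hconj : IsComplexConj c) {s : K}
    (hs : ∀ σ : K →ₐ[ℚ] ℂ, 0 ≤ (σ s).re) (x : K) :
    0 ≤ Algebra.trace ℚ K (x * s * c x) := by
  rw [← Rat.cast_nonneg (K := ℝ), hconj.ratCast_trace_mul_mul]
  exact sum_nonneg fun σ _ => mul_nonneg (hs σ) (normSq_nonneg _)

theorem IsComplexConj.trace_mul_mul_pos (hconj : IsComplexConj c) {s : K}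
    (hs : ∀ σ : K →ₐ[ℚ] ℂ, 0 < (σ s).re) {x : K} (hx : x ≠ 0) :
    0 < Algebra.trace ℚ K (x * s * c x) := by
  obtain ⟨σ₀⟩ : Nonempty (K →ₐ[ℚ] ℂ) := ⟨IsAlgClosed.lift⟩
  rw [← Rat.cast_pos (K := ℝ), hconj.ratCast_trace_mul_mul]
  exact sum_pos' (fun σ _ => mul_nonneg (hs σ).le (normSq_nonneg _))
    ⟨σ₀, mem_univ _, mul_pos (hs σ₀) (normSq_pos.mpr ((map_ne_zero σ₀).mpr hx))⟩

theorem IsComplexConj.sum_re_mul_normSq_aeval_nonneg (hconj : IsComplexConj c) {s : K}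
    (hs : ∀ x : K, 0 ≤ Algebra.trace ℚ K (x * s * c x)) (ζ : K) (p : ℝ[X]) :
    0 ≤ ∑ σ : K →ₐ[ℚ] ℂ, (σ s).re * normSq (aeval (σ ζ) p) := by
  let f : (Fin (p.natDegree + 1) → ℝ) → ℝ := fun a =>
    ∑ σ : K →ₐ[ℚ] ℂ, (σ s).re * normSq (∑ m, (a m : ℂ) * σ ζ ^ (m : ℕ))
  have hf : Continuous f := by fun_prop
  have hrat (q : Fin (p.natDegree + 1) → ℚ) : 0 ≤ f fun m => (q m : ℝ) := by
    let x : K := ∑ m, (q m : K) * ζ ^ (m : ℕ)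
    have hσx (σ : K →ₐ[ℚ] ℂ) : σ x = ∑ m, ((q m : ℝ) : ℂ) * σ ζ ^ (m : ℕ) := by
      simp [x, map_sum]
    have hx := hconj.ratCast_trace_mul_mul s x
    simp only [hσx] at hx
    exact (Rat.cast_nonneg.mpr (hs x)).trans_eq hx
  have heval (z : ℂ) :
      aeval z p = ∑ m : Fin (p.natDegree + 1), (p.coeff m : ℂ) * z ^ (m : ℕ) := by
    rw [aeval_eq_sum_range, ← Fin.sum_univ_eq_sum_range (fun m => p.coeff m • z ^ m)]
    rfl
  simp only [heval]
  exact nonneg_of_continuous_of_forall_ratCast hf hrat fun m => p.coeff m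

theorem IsComplexConj.re_apply_nonneg (hconj : IsComplexConj c) {ζ : K}
    (htop : Algebra.adjoin ℚ {ζ} = ⊤) {s : K}
    (hs : ∀ x : K, 0 ≤ Algebra.trace ℚ K (x * s * c x)) (σ₀ : K →ₐ[ℚ] ℂ) : 0 ≤ (σ₀ s).re := by
  have hext (σ σ' : K →ₐ[ℚ] ℂ) (h : σ ζ = σ' ζ) : σ = σ' :=
    AlgHom.ext_of_adjoin_eq_top htop (by simpa [Set.EqOn] using h)
  -- only `σ₀` and `σ₀ ∘ c` send `ζ` into `{σ₀ ζ, conj (σ₀ ζ)}`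
  have hre (σ : K →ₐ[ℚ] ℂ) (h : σ ζ = σ₀ ζ ∨ σ ζ = conj (σ₀ ζ)) : (σ s).re = (σ₀ s).re := by
    rcases h with h | h
    · rw [hext _ _ h]
    · rw [← hconj] at h
      rw [hext σ (σ₀.comp c.toAlgHom) h]
      exact congrArg re (hconj σ₀ s) |>.trans (conj_re _)
  let Z := ({σ | (σ s).re ≠ (σ₀ s).re} : Finset (K →ₐ[ℚ] ℂ)).image (· ζ)
  obtain ⟨p, hpZ, hp⟩ : ∃ p : ℝ[X], (∀ z ∈ Z, aeval z p = 0) ∧ aeval (σ₀ ζ) p ≠ 0 := by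
    refine exists_aeval_eq_zero_and_ne_zero_of_notMem Z ?_ ?_ <;>
    · simp only [Z, mem_image, mem_filter, mem_univ, true_and, not_exists, not_and]
      intro σ hσ h
      exact hσ (hre σ (by simp [h]))
  have hterm (σ : K →ₐ[ℚ] ℂ) :
      (σ s).re * normSq (aeval (σ ζ) p) = (σ₀ s).re * normSq (aeval (σ ζ) p) := by
    by_cases h : (σ s).re = (σ₀ s).re
    · rw [h]
    · rw [hpZ _ (mem_image_of_mem _ (by simpa using h)), map_zero, mul_zero, mul_zero]
  have hsum := hconj.sum_re_mul_normSq_aeval_nonneg hs ζ p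
  simp only [hterm, ← mul_sum] at hsum
  exact nonneg_of_mul_nonneg_left hsum
    (sum_pos' (fun _ _ => normSq_nonneg _) ⟨σ₀, mem_univ _, normSq_pos.mpr hp⟩)

theorem IsComplexConj.apply_eq_of_forall_trace_mul_mul_comm (hconj : IsComplexConj c)
    {A : Subalgebra ℤ K} (hA : ∀ x : K, ∃ d : ℕ, 0 < d ∧ (d : K) * x ∈ A) {s : K}
    (hs : ∀ x y : A, Algebra.trace ℚ K ((x : K) * s * c (y : K)) =
      Algebra.trace ℚ K ((y : K) * s * c (x : K))) : c s = s := by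
  have horth (x : K) : Algebra.trace ℚ K (x * (c s - s)) = 0 := by
    obtain ⟨d, hd, hdx⟩ := hA x
    have h := hs ⟨_, hdx⟩ 1
    have hc : (1 : K) * s * c (d * x) = c (c s * (d * x)) := by
      rw [map_mul c (c s), hconj.apply_apply, one_mul]
    simp only [OneMemClass.coe_one, map_one, mul_one, hc, Algebra.trace_eq_of_algEquiv] at h
    have hd' : (d : ℚ) ≠ 0 := by positivity
    have hscale : (d : K) * x * s - c s * (d * x) = (d : ℚ) • (x * (s - c s)) := by
      rw [Algebra.smul_def]
      push_cast
      ring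
    rw [← neg_sub, mul_neg, map_neg, neg_eq_zero]
    refine (smul_eq_zero.mp ?_).resolve_left hd'
    rw [← map_smul, ← hscale, map_sub, h, sub_self]
  have hzero := (traceForm_nondegenerate ℚ K).1 (c s - s) fun x => by
    rw [Algebra.traceForm_apply, mul_comm]
    exact horth x
  exact sub_eq_zero.mp hzero

theorem IsComplexConj.traceForms_iff_isTotallyPositive (hconj : IsComplexConj c)
    {ζ : K} (htop : Algebra.adjoin ℚ {ζ} = ⊤) {ι : Type*} [Fintype ι] (s : ι → K) :
    ((∀ i, ∀ x y : Algebra.adjoin ℤ {ζ},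
        Algebra.trace ℚ K ((x : K) * s i * c (y : K)) =
          Algebra.trace ℚ K ((y : K) * s i * c (x : K))) ∧
      (∀ i, ∀ x : Algebra.adjoin ℤ {ζ}, 0 ≤ Algebra.trace ℚ K ((x : K) * s i * c (x : K))) ∧
      (∀ x : Algebra.adjoin ℤ {ζ}, x ≠ 0 →
        0 < ∑ i, Algebra.trace ℚ K ((x : K) * s i * c (x : K)))) ↔
    ((∀ i, s i = 0 ∨ IsTotallyPositive (s i)) ∧ IsTotallyPositive (∑ i, s i)) := by
  have hA := exists_nat_mul_mem_adjoin_int htop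
  have hsum (x : K) : ∑ i, Algebra.trace ℚ K (x * s i * c x) =
      Algebra.trace ℚ K (x * (∑ i, s i) * c x) := by
    rw [← map_sum, mul_sum, sum_mul]
  constructor
  · rintro ⟨hsymm, hnn, hpos⟩
    have hcs (i : ι) : c (s i) = s i :=
      hconj.apply_eq_of_forall_trace_mul_mul_comm hA (hsymm i)
    have hre (i : ι) : ∀ σ : K →ₐ[ℚ] ℂ, 0 ≤ (σ (s i)).re :=
      hconj.re_apply_nonneg htop (trace_mul_mul_nonneg_of_forall_mem hA (hnn i))
    refine ⟨fun i => (em _).imp_right (hconj.isTotallyPositive (hcs i) (hre i)),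
      hconj.isTotallyPositive ?_ ?_ ?_⟩
    · simp only [map_sum, hcs]
    · intro σ
      rw [map_sum, re_sum]
      exact sum_nonneg fun i _ => hre i σ
    · intro h
      have h1 := hpos 1 one_ne_zero
      rw [hsum, h, mul_zero, zero_mul, map_zero] at h1
      exact h1.false
  · rintro ⟨hs, hS⟩
    have hnn (i : ι) (σ : K →ₐ[ℚ] ℂ) : ∃ a : ℝ, 0 ≤ a ∧ σ (s i) = a := by
      rcases hs i with h | h
      · exact ⟨0, le_rfl, by rw [h, map_zero, ofReal_zero]⟩
      · obtain ⟨a, ha, he⟩ := h σ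
        exact ⟨a, ha.le, he⟩
    have hcs (i : ι) : c (s i) = s i :=
      hconj.apply_eq_of_forall_eq_ofReal fun σ => (hnn i σ).imp fun _ => And.right
    have hre (i : ι) (σ : K →ₐ[ℚ] ℂ) : 0 ≤ (σ (s i)).re := by
      obtain ⟨a, ha, he⟩ := hnn i σ
      rwa [he, ofReal_re]
    refine ⟨fun i x y => hconj.trace_mul_mul_comm (hcs i) _ _,
      fun i x => hconj.trace_mul_mul_nonneg (hre i) _, fun x hx => ?_⟩
    rw [hsum]
    exact hconj.trace_mul_mul_pos hS.re_pos (by simpa using hx)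

end CyclotomicTraceForm

open CyclotomicTraceForm in
theorem stmt_17_general (k : ℕ) (r : ℕ+) (K : Type*) [Field K] [Algebra ℚ K]
    [IsCyclotomicExtension {(r : ℕ)} ℚ K] (ζ : K) (hζ : IsPrimitiveRoot ζ (r : ℕ))
    (c : K ≃ₐ[ℚ] K) (hc : c ζ = ζ⁻¹)
    (t' : Fin k → Algebra.adjoin ℤ {ζ}) (t : K) :
    ((∀ i, ∀ x y : Algebra.adjoin ℤ {ζ},
        Algebra.trace ℚ K ((x : K) * (t' i : K) * c t * c (y : K)) =
          Algebra.trace ℚ K ((y : K) * (t' i : K) * c t * c (x : K))) ∧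
      (∀ i, ∀ x : Algebra.adjoin ℤ {ζ},
        0 ≤ Algebra.trace ℚ K ((x : K) * (t' i : K) * c t * c (x : K))) ∧
      (∀ x : Algebra.adjoin ℤ {ζ}, x ≠ 0 →
        0 < ∑ i, Algebra.trace ℚ K ((x : K) * (t' i : K) * c t * c (x : K)))) ↔
    ((∀ i, (t' i : K) * c t = 0 ∨
        (∀ σ : K →+* ℂ, ∃ a : ℝ, 0 < a ∧ σ ((t' i : K) * c t) = (a : ℂ))) ∧
      (∀ σ : K →+* ℂ, ∃ a : ℝ, 0 < a ∧ σ (∑ i, (t' i : K) * c t) = (a : ℂ))) := by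
  have : FiniteDimensional ℚ K := IsCyclotomicExtension.finiteDimensional {(r : ℕ)} ℚ K
  have htop : Algebra.adjoin ℚ {ζ} = ⊤ := IsCyclotomicExtension.adjoin_primitive_root_eq_top hζ
  have hconj : IsComplexConj c := isComplexConj_of_adjoin_eq_top htop r.ne_zero hζ.pow_eq_one hc
  have hassoc (i : Fin k) (x y : K) : x * t' i * c t * c y = x * (t' i * c t) * c y := by ring
  simp only [hassoc]
  exact hconj.traceForms_iff_isTotallyPositive htop fun i => (t' i : K) * c t

/-- Let `t₁, …, t_k ∈ 𝓞_r = ℤ[ζ_r]` and let `t ∈ K_r = ℚ(ζ_r)` be nonzero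
with `Tr(x·t·c(y)) ∈ ℤ` for all `x, y ∈ 𝓞_r`, and set `B_i(x, y) = Tr(x·t_i·c(t)·c(y))`.
Then (a) each `B_i` is symmetric and positive semi-definite and `Σ_i B_i(x, x) > 0` for all
`x ≠ 0`, if and only if (b) each `t_i·c(t)` is zero or totally positive and `Σ_i t_i·c(t)`
is totally positive. -/
theorem stmt_17 (k : ℕ) (hk : 0 < k) (r : ℕ+) (K : Type*) [Field K] [Algebra ℚ K]
    [IsCyclotomicExtension {(r : ℕ)} ℚ K] (ζ : K) (hζ : IsPrimitiveRoot ζ (r : ℕ))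
    (c : K ≃ₐ[ℚ] K) (hc : c ζ = ζ⁻¹)
    (t' : Fin k → Algebra.adjoin ℤ {ζ}) (t : K) (ht : t ≠ 0)
    (hint : ∀ x y : Algebra.adjoin ℤ {ζ}, ∃ n : ℤ,
      Algebra.trace ℚ K ((x : K) * t * c (y : K)) = (n : ℚ)) :
    ((∀ i, ∀ x y : Algebra.adjoin ℤ {ζ},
        Algebra.trace ℚ K ((x : K) * (t' i : K) * c t * c (y : K)) =
          Algebra.trace ℚ K ((y : K) * (t' i : K) * c t * c (x : K))) ∧
      (∀ i, ∀ x : Algebra.adjoin ℤ {ζ},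
        0 ≤ Algebra.trace ℚ K ((x : K) * (t' i : K) * c t * c (x : K))) ∧
      (∀ x : Algebra.adjoin ℤ {ζ}, x ≠ 0 →
        0 < ∑ i, Algebra.trace ℚ K ((x : K) * (t' i : K) * c t * c (x : K)))) ↔
    ((∀ i, (t' i : K) * c t = 0 ∨
        (∀ σ : K →+* ℂ, ∃ a : ℝ, 0 < a ∧ σ ((t' i : K) * c t) = (a : ℂ))) ∧
      (∀ σ : K →+* ℂ, ∃ a : ℝ, 0 < a ∧ σ (∑ i, (t' i : K) * c t) = (a : ℂ))) :=
  stmt_17_general k r K ζ hζ c hc t' t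
end

section
/- Let k and r be positive integers, K_r = ℚ(ζ_r) with ring of integers 𝓞_r = ℤ[ζ_r], ζ_r a primitive r-th root of unity, and c a ℚ-algebra automorphism of K_r with c(ζ_r) = ζ_r^{-1}. Let t_1, …, t_k ∈ 𝓞_r. Then the following are equivalent: (a) there exists a nonzero t ∈ K_r with Tr(x · t · c(y)) ∈ ℤ for all x, y ∈ 𝓞_r such that, setting B_i(x, y) = Tr(x · t_i · c(t) · c(y)), each B_i is symmetric with B_i(x, x) ≥ 0 for all x ∈ 𝓞_r, and Σ_{i=1}^k B_i(x, x) > 0 for all x ≠ 0 (i.e. the pairing with components t_1, …, t_k admits a polarization); (b) the elements t_1, …, t_k are not all zero, and for all i, j ∈ {1, …, k} the element t_i · c(t_j) is either zero or totally positive. -/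
/-!
Write `vᵢ = tᵢ·c(t)`. As `c` is complex conjugation under every embedding `φ : K → ℂ`,
`Tr(x·v·c(x)) = Σ_φ Re(φ v)·|φ x|²`. Symmetry of `Bᵢ` forces `c vᵢ = vᵢ`, by nondegeneracy of the
trace form on the lattice. By weak approximation `K` is dense in the product of its completions at
the infinite places, so positive semi-definiteness of `Bᵢ` makes every `φ vᵢ` a nonnegative real:
each `vᵢ` is zero or totally positive, and then so is `tᵢ·c(tⱼ) = vᵢ·vⱼ / (t·c(t))`. Conversely,
for `t = t_{i₀} ≠ 0` the same formula for the trace gives the polarization.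
-/

open ComplexConjugate Finset

namespace NumberField

variable {K : Type*} [Field K]

def IsTotallyPositive (x : K) : Prop :=
  ∀ φ : K →+* ℂ, ∃ a : ℝ, 0 < a ∧ φ x = a

theorem IsTotallyPositive.mul {x y : K} (hx : IsTotallyPositive x) (hy : IsTotallyPositive y) :
    IsTotallyPositive (x * y) := fun φ ↦ by
  obtain ⟨a, ha, hφx⟩ := hx φ
  obtain ⟨b, hb, hφy⟩ := hy φ
  exact ⟨a * b, mul_pos ha hb, by rw [map_mul, hφx, hφy, Complex.ofReal_mul]⟩

theorem IsTotallyPositive.div {x y : K} (hx : IsTotallyPositive x) (hy : IsTotallyPositive y) :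
    IsTotallyPositive (x / y) := fun φ ↦ by
  obtain ⟨a, ha, hφx⟩ := hx φ
  obtain ⟨b, hb, hφy⟩ := hy φ
  exact ⟨a / b, div_pos ha hb, by rw [map_div₀, hφx, hφy, Complex.ofReal_div]⟩

theorem IsTotallyPositive.re_pos {v : K} (hv : IsTotallyPositive v) (φ : K →+* ℂ) :
    0 < (φ v).re := by
  obtain ⟨a, ha, hφ⟩ := hv φ
  rwa [hφ, Complex.ofReal_re]

def IsComplexConj [CharZero K] (c : K ≃ₐ[ℚ] K) : Prop :=
  ∀ (φ : K →+* ℂ) (x : K), φ (c x) = conj (φ x)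

variable [NumberField K]

theorem ratCast_trace_eq_sum_ringHom (x : K) :
    ((Algebra.trace ℚ K x : ℚ) : ℂ) = ∑ φ : K →+* ℂ, φ x := by
  rw [← eq_ratCast (algebraMap ℚ ℂ), trace_eq_sum_embeddings ℂ]
  exact Fintype.sum_equiv (RingHom.equivRatAlgHom K ℂ).symm _ _ fun _ ↦ rfl

section IntegralClosure

variable (O : Subalgebra ℤ K) [IsIntegralClosure O ℤ K]

theorem exists_int_trace_eq (x : O) : ∃ n : ℤ, Algebra.trace ℚ K x = n := by
  have hx : IsIntegral ℤ (x : K) := IsIntegralClosure.isIntegral_iff (A := O) |>.mpr ⟨x, rfl⟩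
  obtain ⟨n, hn⟩ := IsIntegrallyClosed.isIntegral_iff.mp (Algebra.isIntegral_trace (L := ℚ) hx)
  exact ⟨n, by simp [← hn]⟩

theorem exists_ne_zero_zsmul_mem (x : K) : ∃ m : ℤ, m ≠ 0 ∧ m • x ∈ O := by
  obtain ⟨m, hm, hmx⟩ :=
    ((IsFractionRing.isAlgebraic_iff ℤ ℚ K).mpr (.of_finite ℚ x)).exists_integral_multiple
  obtain ⟨y, hy⟩ := IsIntegralClosure.isIntegral_iff (A := O) |>.mp hmx
  exact ⟨m, hm, hy ▸ y.2⟩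

theorem apply_mem (c : K ≃ₐ[ℚ] K) {x : K} (hx : x ∈ O) : c x ∈ O := by
  have hx' : IsIntegral ℤ x := IsIntegralClosure.isIntegral_iff (A := O) |>.mpr ⟨⟨x, hx⟩, rfl⟩
  obtain ⟨y, hy⟩ := IsIntegralClosure.isIntegral_iff (A := O) |>.mp
    (hx'.map (c.toAlgHom.restrictScalars ℤ))
  exact hy ▸ y.2

theorem eq_zero_of_forall_trace_mul_eq_zero {w : K}
    (h : ∀ x : O, Algebra.trace ℚ K (x * w) = 0) : w = 0 := by
  refine (traceForm_nondegenerate ℚ K).1 w fun x ↦ ?_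
  obtain ⟨m, hm, hmx⟩ := exists_ne_zero_zsmul_mem O x
  have := h ⟨_, hmx⟩
  rw [smul_mul_assoc, map_zsmul, smul_eq_zero] at this
  rw [Algebra.traceForm_apply, mul_comm]
  exact this.resolve_left hm

theorem trace_mul_mul_apply_nonneg_of_forall_mem {c : K ≃ₐ[ℚ] K} {v : K}
    (h : ∀ x : O, 0 ≤ Algebra.trace ℚ K (x * v * c x)) (x : K) :
    0 ≤ Algebra.trace ℚ K (x * v * c x) := by
  obtain ⟨m, hm, hmx⟩ := exists_ne_zero_zsmul_mem O x
  have hmx' := h ⟨_, hmx⟩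
  have e : m • x * v * c (m • x) = (m * m) • (x * v * c x) := by
    rw [map_zsmul]
    simp only [zsmul_eq_mul]
    push_cast
    ring
  rw [e, map_zsmul, zsmul_eq_mul] at hmx'
  exact nonneg_of_mul_nonneg_right hmx' (by exact_mod_cast mul_self_pos.mpr hm)

end IntegralClosure

namespace IsComplexConj

variable {c : K ≃ₐ[ℚ] K} (hc : IsComplexConj c)
include hc

theorem apply_apply (x : K) : c (c x) = x := by
  let φ : K →+* ℂ := Classical.arbitrary _
  exact φ.injective (by rw [hc, hc, Complex.conj_conj])

theorem apply_eq_self_of_isTotallyPositive {v : K} (hv : IsTotallyPositive v) : c v = v := by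
  let φ : K →+* ℂ := Classical.arbitrary _
  obtain ⟨a, -, ha⟩ := hv φ
  exact φ.injective (by rw [hc, ha, Complex.conj_ofReal])

theorem isTotallyPositive_mul_apply {x : K} (hx : x ≠ 0) : IsTotallyPositive (x * c x) :=
  fun φ ↦ ⟨‖φ x‖ ^ 2, pow_pos (norm_pos_iff.mpr ((map_ne_zero φ).mpr hx)) 2, by
    rw [map_mul, hc, Complex.mul_conj', Complex.ofReal_pow]⟩

theorem eq_zero_or_isTotallyPositive {v : K} (hv : c v = v)
    (hre : ∀ φ : K →+* ℂ, 0 ≤ (φ v).re) : v = 0 ∨ IsTotallyPositive v := by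
  refine or_iff_not_imp_left.mpr fun hv0 φ ↦ ?_
  have hreal : ((φ v).re : ℂ) = φ v := Complex.conj_eq_iff_re.mp (by rw [← hc, hv])
  refine ⟨(φ v).re, (hre φ).lt_of_ne fun h ↦ hv0 ?_, hreal.symm⟩
  exact φ.injective (by rw [← hreal, ← h, map_zero, Complex.ofReal_zero])

theorem ratCast_trace_mul_mul_apply (v x : K) :
    ((Algebra.trace ℚ K (x * v * c x) : ℚ) : ℝ) = ∑ φ : K →+* ℂ, (φ v).re * ‖φ x‖ ^ 2 := by
  have h := congrArg Complex.re (ratCast_trace_eq_sum_ringHom (x * v * c x))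
  rw [Complex.ratCast_re, Complex.re_sum] at h
  rw [h]
  refine sum_congr rfl fun φ _ ↦ ?_
  rw [map_mul, map_mul, hc, mul_right_comm, Complex.mul_conj', ← Complex.ofReal_pow,
    Complex.re_ofReal_mul, mul_comm]

theorem trace_mul_mul_apply_nonneg {v : K} (hv : ∀ φ : K →+* ℂ, 0 ≤ (φ v).re) (x : K) :
    0 ≤ Algebra.trace ℚ K (x * v * c x) := by
  have : (0 : ℝ) ≤ ∑ φ : K →+* ℂ, (φ v).re * ‖φ x‖ ^ 2 :=
    sum_nonneg fun φ _ ↦ mul_nonneg (hv φ) (sq_nonneg _)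
  exact_mod_cast (hc.ratCast_trace_mul_mul_apply v x).symm ▸ this

theorem trace_mul_mul_apply_pos {v : K} (hv : IsTotallyPositive v) {x : K} (hx : x ≠ 0) :
    0 < Algebra.trace ℚ K (x * v * c x) := by
  have : (0 : ℝ) < ∑ φ : K →+* ℂ, (φ v).re * ‖φ x‖ ^ 2 :=
    sum_pos (fun φ _ ↦ mul_pos (hv.re_pos φ)
      (pow_pos (norm_pos_iff.mpr ((map_ne_zero φ).mpr hx)) 2)) univ_nonempty
  exact_mod_cast (hc.ratCast_trace_mul_mul_apply v x).symm ▸ this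

/- `G` extends the trace form from the dense image of `K`; at the indicator of the place of `φ`
it is a positive multiple of `Re (φ v)`. -/
theorem re_nonneg_of_trace_mul_mul_apply_nonneg {v : K}
    (h : ∀ x : K, 0 ≤ Algebra.trace ℚ K (x * v * c x)) (φ : K →+* ℂ) : 0 ≤ (φ v).re := by
  let G : ((w : InfinitePlace K) → WithAbs w.1) → ℝ :=
    fun y ↦ ∑ ψ : K →+* ℂ, (ψ v).re * ‖y (InfinitePlace.mk ψ)‖ ^ 2
  have hG_nonneg (y) : 0 ≤ G y := by
    refine (InfinitePlace.denseRange_algebraMap_pi K).induction_on y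
      (isClosed_le continuous_const (by fun_prop)) fun x ↦ ?_
    have hx : G (algebraMap K _ x) = ∑ ψ : K →+* ℂ, (ψ v).re * ‖ψ x‖ ^ 2 := rfl
    rw [hx, ← hc.ratCast_trace_mul_mul_apply]
    exact_mod_cast h x
  classical
  have hsingle : G (Pi.single (InfinitePlace.mk φ) 1) =
      #{ψ : K →+* ℂ | InfinitePlace.mk ψ = InfinitePlace.mk φ} * (φ v).re := by
    rw [card_eq_sum_ones, Nat.cast_sum, sum_mul, sum_filter]
    refine sum_congr rfl fun ψ _ ↦ ?_
    split_ifs with hψ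
    · rw [hψ, Pi.single_eq_same, norm_one, one_pow, mul_one, Nat.cast_one, one_mul]
      rcases InfinitePlace.mk_eq_iff.mp hψ with rfl | rfl
      · rfl
      · simp [ComplexEmbedding.conjugate_coe_eq]
    · rw [Pi.single_eq_of_ne hψ, norm_zero]
      simp
  have hcard : 0 < #{ψ : K →+* ℂ | InfinitePlace.mk ψ = InfinitePlace.mk φ} :=
    card_pos.mpr ⟨φ, by simp⟩
  have := hG_nonneg (Pi.single (InfinitePlace.mk φ) 1)
  rw [hsingle] at this
  exact nonneg_of_mul_nonneg_right this (by exact_mod_cast hcard)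

theorem trace_mul_mul_apply_comm {v : K} (hv : c v = v) (x y : K) :
    Algebra.trace ℚ K (x * v * c y) = Algebra.trace ℚ K (y * v * c x) := by
  rw [← Algebra.trace_eq_of_algEquiv c (y * v * c x)]
  simp only [map_mul, hc.apply_apply, hv]
  congr 1
  ring

theorem apply_eq_self_of_trace_mul_mul_apply_comm (O : Subalgebra ℤ K) [IsIntegralClosure O ℤ K]
    {v : K} (h : ∀ x y : O, Algebra.trace ℚ K (x * v * c y) = Algebra.trace ℚ K (y * v * c x)) :
    c v = v := by
  have key := eq_zero_of_forall_trace_mul_eq_zero O (w := v - c v) fun x ↦ by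
    have hx := h x 1
    rw [OneMemClass.coe_one, map_one, mul_one, one_mul,
      ← Algebra.trace_eq_of_algEquiv c (v * c x), map_mul c, hc.apply_apply] at hx
    rw [mul_sub, map_sub, hx, mul_comm, sub_self]
  exact (sub_eq_zero.mp key).symm

theorem eq_zero_or_isTotallyPositive_of_trace (O : Subalgebra ℤ K) [IsIntegralClosure O ℤ K]
    {v : K}
    (hsym : ∀ x y : O, Algebra.trace ℚ K (x * v * c y) = Algebra.trace ℚ K (y * v * c x))
    (hpsd : ∀ x : O, 0 ≤ Algebra.trace ℚ K (x * v * c x)) :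
    v = 0 ∨ IsTotallyPositive v :=
  hc.eq_zero_or_isTotallyPositive (hc.apply_eq_self_of_trace_mul_mul_apply_comm O hsym)
    (hc.re_nonneg_of_trace_mul_mul_apply_nonneg (trace_mul_mul_apply_nonneg_of_forall_mem O hpsd))

theorem mul_apply_eq_zero_or_isTotallyPositive {a b t : K} (ht : t ≠ 0)
    (ha : a * c t = 0 ∨ IsTotallyPositive (a * c t))
    (hb : b * c t = 0 ∨ IsTotallyPositive (b * c t)) :
    a * c b = 0 ∨ IsTotallyPositive (a * c b) := by
  have hcb : c (b * c t) = b * c t := by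
    rcases hb with hb | hb
    · rw [hb, map_zero]
    · exact hc.apply_eq_self_of_isTotallyPositive hb
  have key : a * c b = a * c t * c (b * c t) / (t * c t) := by
    rw [eq_div_iff (mul_ne_zero ht ((map_ne_zero c).mpr ht)), map_mul, hc.apply_apply]
    ring
  rw [key, hcb]
  rcases ha with ha | ha
  · simp [ha]
  rcases hb with hb | hb
  · simp [hb]
  exact .inr ((ha.mul hb).div (hc.isTotallyPositive_mul_apply ht))

end IsComplexConj

section Polarization

variable {ι : Type*} [Fintype ι] (O : Subalgebra ℤ K)

def IsPolarization (c : K ≃ₐ[ℚ] K) (s : ι → O) (t : K) : Prop :=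
  t ≠ 0 ∧
    (∀ x y : O, ∃ n : ℤ, Algebra.trace ℚ K ((x : K) * t * c (y : K)) = (n : ℚ)) ∧
    (∀ i, ∀ x y : O, Algebra.trace ℚ K ((x : K) * (s i : K) * c t * c (y : K)) =
      Algebra.trace ℚ K ((y : K) * (s i : K) * c t * c (x : K))) ∧
    (∀ i, ∀ x : O, 0 ≤ Algebra.trace ℚ K ((x : K) * (s i : K) * c t * c (x : K))) ∧
    (∀ x : O, x ≠ 0 → 0 < ∑ i, Algebra.trace ℚ K ((x : K) * (s i : K) * c t * c (x : K)))

theorem IsPolarization.exists_ne_zero {c : K ≃ₐ[ℚ] K} {s : ι → O} {t : K}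
    (h : IsPolarization O c s t) : ∃ i, s i ≠ 0 := by
  by_contra! h0
  simpa [h0] using h.2.2.2.2 1 one_ne_zero

variable [IsIntegralClosure O ℤ K] {c : K ≃ₐ[ℚ] K} (hc : IsComplexConj c)
include hc

namespace IsComplexConj

theorem eq_zero_or_isTotallyPositive_of_isPolarization {s : ι → O} {t : K}
    (h : IsPolarization O c s t) (i j : ι) :
    (s i : K) * c (s j) = 0 ∨ IsTotallyPositive ((s i : K) * c (s j)) := by
  obtain ⟨ht, -, hsym, hpsd, -⟩ := h
  have hv (i) : (s i : K) * c t = 0 ∨ IsTotallyPositive ((s i : K) * c t) :=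
    hc.eq_zero_or_isTotallyPositive_of_trace O
      (fun x y ↦ by simpa only [mul_assoc] using hsym i x y)
      (fun x ↦ by simpa only [mul_assoc] using hpsd i x)
  exact hc.mul_apply_eq_zero_or_isTotallyPositive ht (hv i) (hv j)

theorem isPolarization {s : ι → O} {i₀ : ι} (hi₀ : s i₀ ≠ 0)
    (hb : ∀ i, (s i : K) * c (s i₀) = 0 ∨ IsTotallyPositive ((s i : K) * c (s i₀))) :
    IsPolarization O c s (s i₀) := by
  have ht : (s i₀ : K) ≠ 0 := mt ZeroMemClass.coe_eq_zero.mp hi₀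
  have hcv (i) : c ((s i : K) * c (s i₀)) = (s i : K) * c (s i₀) :=
    (hb i).elim (fun h ↦ by rw [h, map_zero]) hc.apply_eq_self_of_isTotallyPositive
  have hre (i) (φ : K →+* ℂ) : 0 ≤ (φ ((s i : K) * c (s i₀))).re :=
    (hb i).elim (fun h ↦ by simp [h]) fun h ↦ (IsTotallyPositive.re_pos h φ).le
  refine ⟨ht, fun x y ↦ exists_int_trace_eq O ⟨_, mul_mem (mul_mem x.2 (s i₀).2)
    (apply_mem O c y.2)⟩, fun i x y ↦ ?_, fun i x ↦ ?_, fun x hx ↦ ?_⟩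
  · simpa only [mul_assoc] using hc.trace_mul_mul_apply_comm (hcv i) x y
  · simpa only [mul_assoc] using hc.trace_mul_mul_apply_nonneg (hre i) x
  refine sum_pos' (fun i _ ↦ ?_) ⟨i₀, mem_univ _, ?_⟩
  · simpa only [mul_assoc] using hc.trace_mul_mul_apply_nonneg (hre i) x
  · simpa only [mul_assoc] using hc.trace_mul_mul_apply_pos
      (hc.isTotallyPositive_mul_apply ht) (mt ZeroMemClass.coe_eq_zero.mp hx)

theorem exists_isPolarization_iff (s : ι → O) :
    (∃ t, IsPolarization O c s t) ↔
      (∃ i, s i ≠ 0) ∧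
        ∀ i j, (s i : K) * c (s j) = 0 ∨ IsTotallyPositive ((s i : K) * c (s j)) :=
  ⟨fun ⟨_, h⟩ ↦ ⟨h.exists_ne_zero, hc.eq_zero_or_isTotallyPositive_of_isPolarization O h⟩,
    fun ⟨⟨_, hi₀⟩, hb⟩ ↦ ⟨_, hc.isPolarization O hi₀ fun i ↦ hb i _⟩⟩

end IsComplexConj

end Polarization

end NumberField

open NumberField

theorem IsPrimitiveRoot.isComplexConj {K : Type*} [Field K] [CharZero K] {n : ℕ} [NeZero n]
    [IsCyclotomicExtension {n} ℚ K] {ζ : K} (hζ : IsPrimitiveRoot ζ n) {c : K ≃ₐ[ℚ] K}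
    (hc : c ζ = ζ⁻¹) : IsComplexConj c := fun φ x ↦ by
  have hnorm : ‖φ ζ‖ = 1 := (hζ.map_of_injective φ.injective).norm'_eq_one (NeZero.ne n)
  have key : (φ.comp (c : K →+* K)).toRatAlgHom = ((starRingEnd ℂ).comp φ).toRatAlgHom := by
    refine AlgHom.ext_of_adjoin_eq_top (IsCyclotomicExtension.adjoin_primitive_root_eq_top hζ) ?_
    rintro _ rfl
    simp [hc, Complex.inv_eq_conj hnorm]
  exact DFunLike.congr_fun key x

theorem stmt_18_general (k : ℕ) (r : ℕ+) (K : Type*) [Field K] [Algebra ℚ K]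
    [IsCyclotomicExtension {(r : ℕ)} ℚ K] (ζ : K) (hζ : IsPrimitiveRoot ζ (r : ℕ))
    (c : K ≃ₐ[ℚ] K) (hc : c ζ = ζ⁻¹)
    (t' : Fin k → Algebra.adjoin ℤ {ζ}) :
    ((∃ t : K, t ≠ 0 ∧
        (∀ x y : Algebra.adjoin ℤ {ζ}, ∃ n : ℤ,
          Algebra.trace ℚ K ((x : K) * t * c (y : K)) = (n : ℚ)) ∧
        (∀ i, ∀ x y : Algebra.adjoin ℤ {ζ},
          Algebra.trace ℚ K ((x : K) * (t' i : K) * c t * c (y : K)) =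
            Algebra.trace ℚ K ((y : K) * (t' i : K) * c t * c (x : K))) ∧
        (∀ i, ∀ x : Algebra.adjoin ℤ {ζ},
          0 ≤ Algebra.trace ℚ K ((x : K) * (t' i : K) * c t * c (x : K))) ∧
        (∀ x : Algebra.adjoin ℤ {ζ}, x ≠ 0 →
          0 < ∑ i, Algebra.trace ℚ K ((x : K) * (t' i : K) * c t * c (x : K)))) ↔
      ((∃ i, t' i ≠ 0) ∧
        ∀ i j, (t' i : K) * c (t' j : K) = 0 ∨
          (∀ σ : K →+* ℂ, ∃ a : ℝ, 0 < a ∧ σ ((t' i : K) * c (t' j : K)) = (a : ℂ)))) := by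
  have : CharZero K := charZero_of_injective_algebraMap (algebraMap ℚ K).injective
  -- identify the given `ℚ`-algebra structure with the canonical one used by `NumberField`
  obtain rfl : ‹Algebra ℚ K› = DivisionRing.toRatAlgebra := Subsingleton.elim _ _
  have : NumberField K := IsCyclotomicExtension.numberField {(r : ℕ)} ℚ K
  have : IsIntegralClosure (Algebra.adjoin ℤ {ζ}) ℤ K :=
    IsCyclotomicExtension.Rat.isIntegralClosure_adjoin_singleton hζ
  exact (hζ.isComplexConj hc).exists_isPolarization_iff (Algebra.adjoin ℤ {ζ}) t'

/-- For `t₁, …, t_k ∈ 𝓞_r = ℤ[ζ_r]`, the lattice pairing with components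
`t₁, …, t_k` admits a polarization — i.e. (a) there is a nonzero `t ∈ K_r` with
`Tr(x·t·c(y)) ∈ ℤ` on `𝓞_r` such that each `B_i(x, y) = Tr(x·t_i·c(t)·c(y))` is symmetric
and positive semi-definite and `Σ_i B_i(x, x) > 0` for `x ≠ 0` — if and only if (b) the
`t_i` are not all zero and each `t_i·c(t_j)` is zero or totally positive. -/
theorem stmt_18 (k : ℕ) (hk : 0 < k) (r : ℕ+) (K : Type*) [Field K] [Algebra ℚ K]
    [IsCyclotomicExtension {(r : ℕ)} ℚ K] (ζ : K) (hζ : IsPrimitiveRoot ζ (r : ℕ))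
    (c : K ≃ₐ[ℚ] K) (hc : c ζ = ζ⁻¹)
    (t' : Fin k → Algebra.adjoin ℤ {ζ}) :
    ((∃ t : K, t ≠ 0 ∧
        (∀ x y : Algebra.adjoin ℤ {ζ}, ∃ n : ℤ,
          Algebra.trace ℚ K ((x : K) * t * c (y : K)) = (n : ℚ)) ∧
        (∀ i, ∀ x y : Algebra.adjoin ℤ {ζ},
          Algebra.trace ℚ K ((x : K) * (t' i : K) * c t * c (y : K)) =
            Algebra.trace ℚ K ((y : K) * (t' i : K) * c t * c (x : K))) ∧
        (∀ i, ∀ x : Algebra.adjoin ℤ {ζ},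
          0 ≤ Algebra.trace ℚ K ((x : K) * (t' i : K) * c t * c (x : K))) ∧
        (∀ x : Algebra.adjoin ℤ {ζ}, x ≠ 0 →
          0 < ∑ i, Algebra.trace ℚ K ((x : K) * (t' i : K) * c t * c (x : K)))) ↔
      ((∃ i, t' i ≠ 0) ∧
        ∀ i j, (t' i : K) * c (t' j : K) = 0 ∨
          (∀ σ : K →+* ℂ, ∃ a : ℝ, 0 < a ∧ σ ((t' i : K) * c (t' j : K)) = (a : ℂ)))) :=
  stmt_18_general k r K ζ hζ c hc t'
end
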